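/- Let G be a graph and s a non-negative integer with 2s+1 strictly less than the odd girth of G. Then there exists a homomorphism from S_{2s+1}(G^{2s+1}) to G. -/

import Mathlib

structure SGraph where
  V : Type
  Adj : V → V → Prop
  symm : ∀ u v, Adj u v → Adj v u

namespace SGraph

/-- There is a walk of length exactly `n` from `u` to `v`. -/
def walkLen (G : SGraph) : ℕ → G.V → G.V → Prop
  | 0, u, v => u = v
  | n+1, u, v => ∃ w, G.Adj u w ∧ G.walkLen n w v

theorem walkLen_concat (G : SGraph) : ∀ (n : ℕ) (u v w : G.V),
    G.walkLen n u v → G.Adj v w → G.walkLen (n+1) u w := by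
  intro n
  induction n with
  | zero =>
      intro u v w h hadj
      cases h
      exact ⟨w, hadj, rfl⟩
  | succ n ih =>
      rintro u v w ⟨x, hux, hxv⟩ hadj
      exact ⟨x, hux, ih x v w hxv hadj⟩

theorem walkLen_symm (G : SGraph) : ∀ (n : ℕ) (u v : G.V),
    G.walkLen n u v → G.walkLen n v u := by
  intro n
  induction n with
  | zero => intro u v h; exact h.symm
  | succ n ih =>
      rintro u v ⟨w, huw, hwv⟩
      exact G.walkLen_concat n v w u (ih w v hwv) (G.symm u w huw)

/-- The `k`-th power of a graph: same vertices, adjacency = existence of a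
walk of length exactly `k` (loops allowed). -/
def pow (G : SGraph) (k : ℕ) : SGraph where
  V := G.V
  Adj u v := G.walkLen k u v
  symm := G.walkLen_symm k

/-- Existence of a graph homomorphism. -/
def homTo (G H : SGraph) : Prop :=
  ∃ f : G.V → H.V, ∀ u v, G.Adj u v → H.Adj (f u) (f v)

/-- The `(2s+1)`-subdivision `S_{2s+1}(G)`: every edge is replaced by a path
of length `2s+1`.  Following the paper's notation, the ordered pair `(u,v)`
(with `u ~ v`) carries the `s` inner vertices `(uv)_1, …, (uv)_s`. -/
def subdiv (G : SGraph) (s : ℕ) : SGraph where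
  V := G.V ⊕ ({p : G.V × G.V // G.Adj p.1 p.2} × Fin s)
  Adj x y :=
    match x, y with
    | Sum.inl u, Sum.inl v => s = 0 ∧ G.Adj u v
    | Sum.inl u, Sum.inr (e, k) => u = e.1.2 ∧ (k : ℕ) = s - 1
    | Sum.inr (e, k), Sum.inl u => u = e.1.2 ∧ (k : ℕ) = s - 1
    | Sum.inr (e, k), Sum.inr (e', l) =>
        e'.1.1 = e.1.2 ∧ e'.1.2 = e.1.1 ∧
        ((k : ℕ) + (l : ℕ) + 2 = s ∨ (k : ℕ) + (l : ℕ) + 2 = s + 1)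
  symm := by
    rintro (u | ⟨e, k⟩) (v | ⟨e', l⟩) h
    · exact ⟨h.1, G.symm _ _ h.2⟩
    · exact h
    · exact h
    · obtain ⟨h1, h2, h3⟩ := h
      exact ⟨h2.symm, h1.symm, by omega⟩

/-- `q < og(G)`: the rational `q` is smaller than the odd girth of `G`
(the length of a shortest odd closed walk; vacuously true if `G` is bipartite). -/
def ltOddGirth (G : SGraph) (q : ℚ) : Prop :=
  ∀ n : ℕ, Odd n → (∃ v, G.walkLen n v v) → q < (n : ℚ)

/-- A graph is non-bipartite iff it contains an odd closed walk. -/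
def Nonbipartite (G : SGraph) : Prop :=
  ∃ (n : ℕ) (v : G.V), Odd n ∧ G.walkLen n v v

/-- The odd girth, as an extended natural number (`⊤` for bipartite graphs). -/
noncomputable def oddGirth (G : SGraph) : ℕ∞ :=
  sInf {N : ℕ∞ | ∃ n : ℕ, N = (n : ℕ∞) ∧ Odd n ∧ ∃ v, G.walkLen n v v}

/-- The complete graph on `m` vertices. -/
def completeGraph (m : ℕ) : SGraph :=
  ⟨Fin m, fun u v => u ≠ v, fun _ _ h => h.symm⟩

/-- The chromatic number: least `m` such that `G` maps homomorphically to `K_m`. -/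
noncomputable def chromatic (G : SGraph) : ℕ :=
  sInf {m : ℕ | G.homTo (completeGraph m)}

/-- The `i`-th power thickness
`θ_i(G) = sup { (2r+1)/(2s+1) | χ(G^{(2r+1)/(2s+1)}) ≤ χ(G)+i, (2r+1)/(2s+1) < og(G) }`. -/
noncomputable def powerThickness (G : SGraph) (i : ℤ) : ℝ :=
  sSup {x : ℝ | ∃ r s : ℕ, x = (2*(r:ℝ)+1)/(2*(s:ℝ)+1) ∧
    ((((G.subdiv s).pow (2*r+1)).chromatic : ℤ) ≤ (G.chromatic : ℤ) + i) ∧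
    G.ltOddGirth ((2*(r:ℚ)+1)/(2*(s:ℚ)+1))}

/-- The graph `H^{-1/(2r+1)}`. -/
def negPow (H : SGraph) (r : ℕ) : SGraph where
  V := {A : Fin (r+1) → Set H.V //
        (∃ v, A 0 = {v}) ∧
        ∀ i : Fin (r+1), (A i).Nonempty ∧ A i ⊆ {u | ∃ v ∈ A 0, H.walkLen i v u}}
  Adj A B :=
    (∀ i j : Fin (r+1), (j : ℕ) = (i : ℕ) + 1 → A.1 i ⊆ B.1 j ∧ B.1 i ⊆ A.1 j) ∧
    ∀ j : Fin (r+1), ∀ a ∈ A.1 j, ∀ b ∈ B.1 j, H.Adj a b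
  symm := by
    rintro A B ⟨h1, h2⟩
    exact ⟨fun i j hij => ⟨(h1 i j hij).2, (h1 i j hij).1⟩,
           fun j b hb a ha => H.symm _ _ (h2 j a ha b hb)⟩

/-- The circular complete graph `K_{n/d}`. -/
def circGraph (n d : ℕ) : SGraph where
  V := Fin n
  Adj u v := (d : ℤ) ≤ |(u : ℤ) - (v : ℤ)| ∧ |(u : ℤ) - (v : ℤ)| ≤ (n : ℤ) - d
  symm := by
    intro u v h
    rwa [abs_sub_comm]

/-- The circular chromatic number, as a real number. -/
noncomputable def circChrom (G : SGraph) : ℝ :=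
  sInf {x : ℝ | ∃ n d : ℕ, 0 < d ∧ 2 * d ≤ n ∧ Nat.gcd n d = 1 ∧
    x = (n : ℝ) / (d : ℝ) ∧ G.homTo (circGraph n d)}

/-- The cycle on `m` vertices. -/
def cycleGraph (m : ℕ) : SGraph :=
  ⟨ZMod m, fun i j => i = j + 1 ∨ j = i + 1, fun _ _ h => h.symm⟩

/-- Graph isomorphism. -/
def Isom (G H : SGraph) : Prop :=
  ∃ f : G.V ≃ H.V, ∀ u v, G.Adj u v ↔ H.Adj (f u) (f v)

/-- The helical graph `H(m,n,k)`. -/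
def helical (m n k : ℕ) : SGraph where
  V := {A : Fin k → Set (Fin m) //
        (∀ h : 0 < k, (A ⟨0, h⟩).ncard = n) ∧
        (∀ i, n ≤ (A i).ncard) ∧
        (∀ i : Fin k, ∀ h : (i : ℕ) + 1 < k, A i ∩ A ⟨(i : ℕ) + 1, h⟩ = ∅) ∧
        (∀ i : Fin k, ∀ h : (i : ℕ) + 2 < k, A i ⊆ A ⟨(i : ℕ) + 2, h⟩)}
  Adj A B :=
    (∀ i, A.1 i ∩ B.1 i = ∅) ∧
    (∀ i : Fin k, ∀ h : (i : ℕ) + 1 < k,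
      A.1 i ⊆ B.1 ⟨(i : ℕ) + 1, h⟩ ∧ B.1 i ⊆ A.1 ⟨(i : ℕ) + 1, h⟩)
  symm := by
    rintro A B ⟨h1, h2⟩
    refine ⟨fun i => ?_, fun i h => ⟨(h2 i h).2, (h2 i h).1⟩⟩
    rw [Set.inter_comm]
    exact h1 i

/-- A graph with chromatic number `k` is colorful if every proper `k`-coloring
admits a (nonempty) induced subgraph all of whose vertices see all `k` colors in
their closed neighborhood. -/
def Colorful (G : SGraph) : Prop :=
  ∀ c : G.V → Fin G.chromatic, (∀ u v, G.Adj u v → c u ≠ c v) →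
    ∃ S : Set G.V, S.Nonempty ∧
      ∀ v ∈ S, ∀ col : Fin G.chromatic,
        ∃ u ∈ S, (u = v ∨ G.Adj v u) ∧ c u = col

end SGraph


/-!
Fix, for every edge `uv` of `G^{2s+1}`, a walk of length `2s+1` from `u` to `v` such that the
walk fixed for `vu` is the reverse one; this is possible because `2s+1 < og(G)` makes `G^{2s+1}`
loopless. Sending the `i`-th vertex of each subdivided edge to the `i`-th vertex of its walk is
then a homomorphism `S_{2s+1}(G^{2s+1}) → G`.
-/

namespace SGraph

variable (G : SGraph)

def IsWalkSeq (n : ℕ) (u v : G.V) (p : ℕ → G.V) : Prop :=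
  p 0 = u ∧ p n = v ∧ ∀ i < n, G.Adj (p i) (p (i + 1))

variable {G}

theorem walkLen_one {u v : G.V} (h : G.walkLen 1 u v) : G.Adj u v := by
  obtain ⟨w, huw, rfl⟩ := h
  exact huw

theorem exists_isWalkSeq_of_walkLen {n : ℕ} {u v : G.V} (h : G.walkLen n u v) :
    ∃ p, G.IsWalkSeq n u v p := by
  induction n generalizing u with
  | zero => exact ⟨fun _ => u, rfl, h, by omega⟩
  | succ n ih =>
    obtain ⟨w, huw, hwv⟩ := h
    obtain ⟨p, rfl, hpn, hadj⟩ := ih hwv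
    refine ⟨fun | 0 => u | i + 1 => p i, rfl, hpn, ?_⟩
    rintro (_ | i) hi
    exacts [huw, hadj i (by omega)]

theorem IsWalkSeq.reverse {n : ℕ} {u v : G.V} {p : ℕ → G.V} (hp : G.IsWalkSeq n u v p) :
    G.IsWalkSeq n v u (fun i => p (n - i)) := by
  obtain ⟨hp0, hpn, hadj⟩ := hp
  refine ⟨by simpa using hpn, by simpa using hp0, fun i hi => ?_⟩
  have := G.symm _ _ (hadj (n - (i + 1)) (by omega))
  rwa [show n - (i + 1) + 1 = n - i by omega] at this

theorem IsWalkSeq.adj_of_succ_eq {n : ℕ} {u v : G.V} {p : ℕ → G.V} (hp : G.IsWalkSeq n u v p)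
    {i j : ℕ} (hij : i + 1 = j ∨ j + 1 = i) (hi : i ≤ n) (hj : j ≤ n) : G.Adj (p i) (p j) := by
  rcases hij with rfl | rfl
  · exact hp.2.2 i (by omega)
  · exact G.symm _ _ (hp.2.2 j (by omega))

theorem exists_walkSeq_choice_reverse {n : ℕ} (hloop : ∀ u, ¬ G.walkLen n u u) :
    ∃ P : G.V → G.V → ℕ → G.V, ∀ u v, G.walkLen n u v →
      G.IsWalkSeq n u v (P u v) ∧ ∀ i ≤ n, P v u i = P u v (n - i) := by
  obtain ⟨_, -⟩ := exists_wellFoundedLT G.V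
  have : ∀ u v, ∃ p, G.walkLen n u v → G.IsWalkSeq n u v p := fun u v => by
    by_cases h : G.walkLen n u v
    · obtain ⟨p, hp⟩ := exists_isWalkSeq_of_walkLen h
      exact ⟨p, fun _ => hp⟩
    · exact ⟨fun _ => u, fun h' => absurd h' h⟩
  choose Q hQ using this
  -- orient each edge by a linear order on the vertices and reverse the walk against it
  refine ⟨fun u v => if u ≤ v then Q u v else fun i => Q v u (n - i), fun u v huv => ?_⟩
  have hvu := G.walkLen_symm n u v huv
  have hne : u ≠ v := fun h => hloop u (h ▸ huv)
  rcases lt_or_gt_of_ne hne with hlt | hlt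
  · refine ⟨?_, fun i _ => ?_⟩ <;> simp only [if_pos hlt.le, if_neg (not_le.2 hlt)]
    exact hQ u v huv
  · simp only [if_neg (not_le.2 hlt), if_pos hlt.le]
    exact ⟨(hQ v u hvu).reverse, fun i hi => by rw [Nat.sub_sub_self hi]⟩

theorem not_walkLen_self_of_ltOddGirth {n : ℕ} (hn : Odd n) (h : G.ltOddGirth n) (u : G.V) :
    ¬ G.walkLen n u u :=
  fun hu => lt_irrefl _ (h n hn ⟨u, hu⟩)

theorem subdiv_pow_homTo_of_walkSeq_choice {s : ℕ} (P : G.V → G.V → ℕ → G.V)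
    (hP : ∀ u v, G.walkLen (2 * s + 1) u v →
      G.IsWalkSeq (2 * s + 1) u v (P u v) ∧ ∀ i ≤ 2 * s + 1, P v u i = P u v (2 * s + 1 - i)) :
    ((G.pow (2 * s + 1)).subdiv s).homTo G := by
  -- on the subdivided edge `uv`, `(uv)_k` lies at distance `2k+2` from `u` and `(vu)_l` at
  -- distance `2s-1-2l`
  refine ⟨Sum.elim id fun e => P e.1.1.1 e.1.1.2 (2 * e.2 + 2), ?_⟩
  rintro (u | ⟨⟨⟨u, v⟩, huv⟩, k⟩) (w | ⟨⟨⟨u', v'⟩, huv'⟩, l⟩) hadj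
  · obtain ⟨rfl, huw⟩ := hadj
    exact walkLen_one huw
  · obtain ⟨rfl, hl⟩ := hadj
    have hwalk := (hP u' u huv').1
    have := hwalk.adj_of_succ_eq (i := 2 * s + 1) (j := 2 * l + 2) (Or.inr (by omega)) le_rfl
      (by omega)
    rwa [hwalk.2.1] at this
  · obtain ⟨rfl, hk⟩ := hadj
    have hwalk := (hP u w huv).1
    have := hwalk.adj_of_succ_eq (i := 2 * k + 2) (j := 2 * s + 1) (Or.inl (by omega)) (by omega)
      le_rfl
    rwa [hwalk.2.1] at this
  · obtain ⟨h₁ : u' = v, h₂ : v' = u, hkl⟩ := hadj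
    subst u' v'
    obtain ⟨hwalk, hrev⟩ := hP u v huv
    change G.Adj (P u v (2 * k + 2)) (P v u (2 * l + 2))
    rw [hrev _ (by omega)]
    exact hwalk.adj_of_succ_eq (by omega) (by omega) (by omega)

end SGraph

open SGraph

/-- If `2s+1 < og(G)` then `S_{2s+1}(G^{2s+1}) → G`. -/
theorem pow_subdiv_hom (G : SGraph) (s : ℕ) (h : G.ltOddGirth (2 * (s : ℚ) + 1)) :
    ((G.pow (2 * s + 1)).subdiv s).homTo G := by
  obtain ⟨P, hP⟩ := G.exists_walkSeq_choice_reverse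
    (G.not_walkLen_self_of_ltOddGirth (n := 2 * s + 1) ⟨s, rfl⟩ (by exact_mod_cast h))
  exact G.subdiv_pow_homTo_of_walkSeq_choice P hP
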